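/- Let A = {0,1,4} and n = 5. Then [1, 5/4] ⊆ C_{A,5} + C_{A,5}. Consequently C_{A,5} + C_{A,5} contains an interval but is not equal to [0,2], so it consists of infinitely many maximal intervals and infinitely many maximal gaps. -/

import Mathlib

open Pointwise

def linCantor (n : ℕ) (A : Set ℕ) : Set ℝ :=
  {x | ∃ a : ℕ → ℕ, (∀ i, a i ∈ A) ∧ x = ∑' i : ℕ, (a i : ℝ) / n ^ (i + 1)}

/-- `[a,b]` is a maximal (nondegenerate closed) interval of `S`. -/
def IsMaxInterval (S : Set ℝ) (a b : ℝ) : Prop :=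
  a < b ∧ Set.Icc a b ⊆ S ∧
    ∀ a' b' : ℝ, a' ≤ a → b ≤ b' → Set.Icc a' b' ⊆ S → a' = a ∧ b' = b

/-- `(a,b)` is a maximal gap of `S` within `[0,2]`. -/
def IsMaxGap (S : Set ℝ) (a b : ℝ) : Prop :=
  a < b ∧ Set.Ioo a b ∩ S = ∅ ∧
    ∀ a' b' : ℝ, a' ≤ a → b ≤ b' → a' < b' → Set.Ioo a' b' ∩ S = ∅ →
      (0 : ℝ) ≤ a' → b' ≤ 2 → a' = a ∧ b' = b

/-!
Write `𝒮 = C_{A,5} + C_{A,5} = C_{B,5}` with `B = {0,1,2,4,5,8}`, the compact set with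
`𝒮 = ⋃_{b ∈ B} (b + 𝒮)/5`. Since `{4,…,10} ⊆ B + {0,5}`, each contraction `y ↦ (d + y)/5` with
`4 ≤ d ≤ 9` maps `𝒮 + {0,1}` into itself, and their images of `[1,2]` cover `[1,2]`; a closed set
that is mapped into itself by contractions whose images of `X` cover `X` and that is at bounded
distance from `X` contains `X`, so `[1,2] ⊆ 𝒮 + {0,1}`. Then `[1,6/5] ⊆ (4 + 𝒮 + {0,1})/5 ⊆ 𝒮`
and `[6/5,5/4] = (5 + [1,5/4])/5` give `[1,5/4] ⊆ 𝒮`.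

The copies `5⁻ᵏ[1,5/4] ⊆ 𝒮` are separated by the points `(7/10)5⁻ᵏ ∉ 𝒮`, so they lie in distinct
maximal intervals. Near `2` only the digit `8` is available, so the intervals
`(2 - 3·5⁻ᵏ, 2 - 2·5⁻ᵏ)` miss `𝒮` while their right endpoints lie in `𝒮`; the maximal gaps
containing them are therefore distinct.
-/

open Set Filter
open scoped Topology NNReal

section LinCantor

variable {n : ℕ} {A A' : Set ℕ}

theorem summable_digits (hn : 1 < n) {M : ℕ} {a : ℕ → ℕ} (ha : ∀ i, a i ≤ M) :
    Summable fun i => (a i : ℝ) / n ^ (i + 1) := by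
  have hn' : (1 : ℝ) < n := by exact_mod_cast hn
  have hgeom : Summable fun i : ℕ => (M / n : ℝ) * (1 / n) ^ i :=
    (summable_geometric_of_lt_one (by positivity) ((div_lt_one (by linarith)).2 hn')).mul_left _
  refine hgeom.of_nonneg_of_le (fun i => by positivity) fun i => ?_
  calc (a i : ℝ) / n ^ (i + 1) ≤ M / n ^ (i + 1) := by gcongr; exact_mod_cast ha i
    _ = (M / n : ℝ) * (1 / n) ^ i := by rw [one_div_pow, pow_succ]; field_simp

theorem tsum_const_div_pow (hn : 1 < n) (c : ℝ) : ∑' i : ℕ, c / n ^ (i + 1) = c / (n - 1) := by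
  have hn' : (1 : ℝ) < n := by exact_mod_cast hn
  have hq : (1 / n : ℝ) < 1 := (div_lt_one (by linarith)).2 hn'
  have h : (fun i : ℕ => c / n ^ (i + 1)) = fun i => c / n * (1 / n : ℝ) ^ i := by
    funext i; rw [one_div_pow, pow_succ]; field_simp
  rw [h, tsum_mul_left, tsum_geometric_of_lt_one (by positivity) hq]
  field_simp

theorem linCantor_subset_Icc (hn : 1 < n) {M : ℕ} (hA : ∀ a ∈ A, a ≤ M) :
    linCantor n A ⊆ Icc 0 (M / (n - 1)) := by
  rintro x ⟨a, ha, rfl⟩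
  have hM : ∀ i, a i ≤ M := fun i => hA _ (ha i)
  refine ⟨tsum_nonneg fun i => by positivity, ?_⟩
  rw [← tsum_const_div_pow hn]
  exact (summable_digits hn hM).tsum_le_tsum (fun i => by gcongr; exact_mod_cast hM i)
    (summable_digits hn (M := M) fun _ => le_rfl)

theorem mem_linCantor_iff (hn : 1 < n) (hA : BddAbove A) {x : ℝ} :
    x ∈ linCantor n A ↔ ∃ a ∈ A, ∃ y ∈ linCantor n A, x = (a + y) / n := by
  obtain ⟨M, hM⟩ := hA
  constructor
  · rintro ⟨a, ha, rfl⟩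
    refine ⟨a 0, ha 0, _, ⟨fun i => a (i + 1), fun i => ha _, rfl⟩, ?_⟩
    rw [(summable_digits hn fun i => hM (ha i)).tsum_eq_zero_add, add_div, ← tsum_div_const]
    congr 1
    · ring
    · congr 1 with i; ring
  · rintro ⟨a₀, ha₀, y, ⟨a, ha, rfl⟩, rfl⟩
    let b : ℕ → ℕ := fun | 0 => a₀ | i + 1 => a i
    have hb : ∀ i, b i ∈ A := fun | 0 => ha₀ | i + 1 => ha i
    refine ⟨b, hb, ?_⟩
    rw [(summable_digits hn fun i => hM (hb i)).tsum_eq_zero_add, add_div, ← tsum_div_const]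
    congr 1
    · simp [b]
    · congr 1 with i; simp only [b]; ring

theorem isCompact_linCantor (hn : 1 < n) (hA : A.Finite) : IsCompact (linCantor n A) := by
  have : Finite A := hA.to_subtype
  obtain ⟨M, hM⟩ := hA.bddAbove
  have hrange :
      linCantor n A = range fun a : ℕ → A => ∑' i, ((a i : ℕ) : ℝ) / n ^ (i + 1) := by
    ext x
    constructor
    · rintro ⟨a, ha, rfl⟩
      exact ⟨fun i => ⟨a i, ha i⟩, rfl⟩
    · rintro ⟨a, rfl⟩
      exact ⟨fun i => a i, fun i => (a i).2, rfl⟩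
  rw [hrange]
  refine isCompact_range (continuous_tsum (fun i => ?_)
    (summable_digits hn (M := M) fun _ => le_rfl) fun i a => ?_)
  · exact (continuous_of_discreteTopology (f := fun d : A => ((d : ℕ) : ℝ) / n ^ (i + 1))).comp
      (continuous_apply i)
  · rw [Real.norm_of_nonneg (by positivity)]
    gcongr
    exact_mod_cast hM (a i).2

theorem linCantor_add (hn : 1 < n) (hA : BddAbove A) (hA' : BddAbove A') :
    linCantor n A + linCantor n A' = linCantor n (A + A') := by
  obtain ⟨M, hM⟩ := hA
  obtain ⟨M', hM'⟩ := hA'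
  ext x
  constructor
  · rintro ⟨_, ⟨a, ha, rfl⟩, _, ⟨a', ha', rfl⟩, rfl⟩
    dsimp only
    refine ⟨fun i => a i + a' i, fun i => Set.add_mem_add (ha i) (ha' i), ?_⟩
    rw [← (summable_digits hn fun i => hM (ha i)).tsum_add
      (summable_digits hn fun i => hM' (ha' i))]
    congr 1 with i
    push_cast
    ring
  · rintro ⟨b, hb, rfl⟩
    choose a ha a' ha' hsum using hb
    refine ⟨_, ⟨a, ha, rfl⟩, _, ⟨a', ha', rfl⟩, ?_⟩
    dsimp only at hsum ⊢
    rw [← (summable_digits hn fun i => hM (ha i)).tsum_add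
      (summable_digits hn fun i => hM' (ha' i))]
    congr 1 with i
    rw [← hsum i]
    push_cast
    ring

end LinCantor

theorem IsClosed.subset_of_forall_mem_or_lipschitz_image {α : Type*} [PseudoMetricSpace α]
    {s X : Set α} (hs : IsClosed s) {K : ℝ≥0} (hK : K < 1) {R : ℝ}
    (hR : ∀ x ∈ X, ∃ c ∈ s, dist x c ≤ R)
    (hstep : ∀ x ∈ X, x ∈ s ∨
      ∃ y ∈ X, ∃ f : α → α, LipschitzWith K f ∧ MapsTo f s s ∧ f y = x) :
    X ⊆ s := by
  have approx : ∀ k : ℕ, ∀ x ∈ X, ∃ c ∈ s, dist x c ≤ K ^ k * R := by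
    intro k
    induction k with
    | zero => simpa using hR
    | succ k ih =>
      intro x hx
      rcases hstep x hx with hxs | ⟨y, hy, f, hf, hfs, rfl⟩
      · obtain ⟨c, -, hxc⟩ := hR x hx
        exact ⟨x, hxs, by rw [dist_self]; have := dist_nonneg.trans hxc; positivity⟩
      · obtain ⟨c, hc, hyc⟩ := ih y hy
        refine ⟨f c, hfs hc, ?_⟩
        calc dist (f y) (f c) ≤ K * dist y c := hf.dist_le_mul y c
          _ ≤ K * (K ^ k * R) := by gcongr
          _ = K ^ (k + 1) * R := by ring
  have hlim : Tendsto (fun k => (K : ℝ) ^ k * R) atTop (𝓝 0) := by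
    simpa using (tendsto_pow_atTop_nhds_zero_of_lt_one K.2 hK).mul_const R
  intro x hx
  rw [← hs.closure_eq, Metric.mem_closure_iff]
  intro ε hε
  obtain ⟨k, hk⟩ := (hlim.eventually (gt_mem_nhds hε)).exists
  obtain ⟨c, hc, hxc⟩ := approx k x hx
  exact ⟨c, hc, hxc.trans_lt hk⟩

theorem exists_isMaxInterval_superset {S : Set ℝ} (hS : IsCompact S) {a b : ℝ} (hab : a < b)
    (h : Icc a b ⊆ S) : ∃ a' b', a' ≤ a ∧ b ≤ b' ∧ IsMaxInterval S a' b' := by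
  set K := connectedComponentIn S a
  have hK : IsPreconnected K := isPreconnected_connectedComponentIn
  have haK : a ∈ K := mem_connectedComponentIn (h ⟨le_rfl, hab.le⟩)
  have hIcc : ∀ {a' b'}, a' ≤ a → a ≤ b' → Icc a' b' ⊆ S → Icc a' b' ⊆ K :=
    fun ha hb hsub => isPreconnected_Icc.subset_connectedComponentIn ⟨ha, hb⟩ hsub
  have hKcpt : IsCompact K := by
    refine hS.of_isClosed_subset (closure_subset_iff_isClosed.1 ?_)
      (connectedComponentIn_subset _ _)
    exact hK.closure.subset_connectedComponentIn (subset_closure haK)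
      (closure_minimal (connectedComponentIn_subset _ _) hS.isClosed)
  have hKeq : K = Icc (sInf K) (sSup K) := eq_Icc_of_connected_compact ⟨⟨a, haK⟩, hK⟩ hKcpt
  have hinf : sInf K ≤ a := csInf_le hKcpt.bddBelow haK
  have hsup : b ≤ sSup K := le_csSup hKcpt.bddAbove (hIcc le_rfl hab.le h ⟨hab.le, le_rfl⟩)
  refine ⟨sInf K, sSup K, hinf, hsup, hinf.trans_lt (hab.trans_le hsup),
    hKeq ▸ connectedComponentIn_subset _ _, fun a' b' ha' hb' hsub => ?_⟩
  have hsub' := hIcc (ha'.trans hinf) (hab.le.trans (hsup.trans hb')) hsub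
  rw [hKeq, Icc_subset_Icc_iff (ha'.trans (hinf.trans (hab.le.trans (hsup.trans hb'))))] at hsub'
  exact ⟨ha'.antisymm hsub'.1, hsub'.2.antisymm hb'⟩

theorem isMaxGap_of_mem {S : Set ℝ} {a b : ℝ} (hab : a < b) (ha : a ∈ S) (hb : b ∈ S)
    (hgap : Ioo a b ∩ S = ∅) : IsMaxGap S a b := by
  refine ⟨hab, hgap, fun a' b' ha' hb' _ hgap' _ _ => ⟨ha'.antisymm ?_, hb'.antisymm' ?_⟩⟩
  · exact not_lt.1 fun h => notMem_empty _ (hgap'.subset ⟨⟨h, hab.trans_le hb'⟩, ha⟩)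
  · exact not_lt.1 fun h => notMem_empty _ (hgap'.subset ⟨⟨ha'.trans_lt hab, h⟩, hb⟩)

theorem exists_isMaxGap_of_right_mem {S : Set ℝ} (hS : IsClosed S) {c a b : ℝ} (hc : c ∈ S)
    (hca : c ≤ a) (hab : a < b) (hb : b ∈ S) (hgap : Ioo a b ∩ S = ∅) :
    ∃ a', IsMaxGap S a' b := by
  have hmem : sSup (S ∩ Iic a) ∈ S ∩ Iic a :=
    (hS.inter isClosed_Iic).csSup_mem ⟨c, hc, hca⟩ ⟨a, fun x hx => hx.2⟩
  refine ⟨_, isMaxGap_of_mem (hmem.2.trans_lt hab) hmem.1 hb ?_⟩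
  refine eq_empty_of_forall_notMem fun x ⟨⟨hx, hxb⟩, hxS⟩ => ?_
  rcases le_or_gt x a with hxa | hxa
  · exact hx.not_ge (le_csSup ⟨a, fun y hy => hy.2⟩ ⟨hxS, hxa⟩)
  · exact notMem_empty _ (hgap.subset ⟨⟨hxa, hxb⟩, hxS⟩)

local notation "𝒮" => linCantor 5 {0, 1, 2, 4, 5, 8}

theorem linCantor_five_add_self :
    linCantor 5 {0, 1, 4} + linCantor 5 {0, 1, 4} = 𝒮 := by
  rw [linCantor_add (by norm_num) (toFinite _).bddAbove (toFinite _).bddAbove]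
  congr 1
  ext m
  simp only [Set.mem_add, mem_insert_iff, mem_singleton_iff, or_and_right, exists_or,
    exists_eq_left]
  omega

namespace LinCantorFive

theorem mem_iff {x : ℝ} :
    x ∈ 𝒮 ↔ ∃ b ∈ ({0, 1, 2, 4, 5, 8} : Set ℕ), ∃ y ∈ 𝒮, x = (b + y) / 5 := by
  simpa using mem_linCantor_iff (x := x) (n := 5) (by norm_num)
    (toFinite ({0, 1, 2, 4, 5, 8} : Set ℕ)).bddAbove

theorem digit_mem {b : ℕ} (hb : b ∈ ({0, 1, 2, 4, 5, 8} : Set ℕ)) {y : ℝ} (hy : y ∈ 𝒮) :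
    (b + y) / 5 ∈ 𝒮 :=
  mem_iff.2 ⟨b, hb, y, hy, rfl⟩

theorem isCompact : IsCompact 𝒮 :=
  isCompact_linCantor (by norm_num) (toFinite _)

theorem subset_Icc : 𝒮 ⊆ Icc 0 2 := by
  have := linCantor_subset_Icc (n := 5) (A := {0, 1, 2, 4, 5, 8}) (M := 8) (by norm_num)
    (by simp)
  norm_num at this
  exact this

theorem zero_mem : (0 : ℝ) ∈ 𝒮 :=
  ⟨fun _ => 0, fun _ => by simp, by simp⟩

theorem one_mem : (1 : ℝ) ∈ 𝒮 := by
  simpa using digit_mem (b := 5) (by simp) zero_mem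

theorem exists_digit_add_five_mul {m : ℕ} (h4 : 4 ≤ m) (h10 : m ≤ 10) :
    ∃ b ∈ ({0, 1, 2, 4, 5, 8} : Set ℕ), ∃ e ∈ ({0, 1} : Set ℕ), m = b + 5 * e := by
  interval_cases m <;> simp

theorem mapsTo_add_zero_one {d : ℕ} (h4 : 4 ≤ d) (h9 : d ≤ 9) :
    MapsTo (fun y : ℝ => (d + y) / 5) (𝒮 + {0, 1}) (𝒮 + {0, 1}) := by
  rintro _ ⟨r, hr, t, ht, rfl⟩
  obtain ⟨e, he1, rfl⟩ : ∃ e : ℕ, e ≤ 1 ∧ (e : ℝ) = t := by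
    rcases ht with rfl | rfl
    exacts [⟨0, zero_le_one, Nat.cast_zero⟩, ⟨1, le_rfl, Nat.cast_one⟩]
  obtain ⟨b, hb, e', he'', hde⟩ := exists_digit_add_five_mul (m := d + e) (by omega) (by omega)
  refine ⟨(b + r) / 5, digit_mem hb hr, e', by rcases he'' with rfl | rfl <;> simp, ?_⟩
  have : (d : ℝ) + e = b + 5 * e' := by exact_mod_cast hde
  simp only
  linarith

theorem lipschitzWith_add_div_five (c : ℝ) : LipschitzWith (1 / 5) fun y : ℝ => (c + y) / 5 :=
  LipschitzWith.of_dist_le_mul fun x y => by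
    rw [Real.dist_eq, Real.dist_eq, show (c + x) / 5 - (c + y) / 5 = 1 / 5 * (x - y) by ring,
      abs_mul]
    norm_num

theorem Icc_one_two_subset : Icc (1 : ℝ) 2 ⊆ 𝒮 + {0, 1} := by
  have hclosed : IsClosed (𝒮 + {0, 1}) :=
    (isCompact.add (toFinite ({0, 1} : Set ℝ)).isCompact).isClosed
  refine hclosed.subset_of_forall_mem_or_lipschitz_image (K := 1 / 5) (by norm_num) (R := 1)
    (fun x hx => ⟨0 + 1, add_mem_add zero_mem (by simp), ?_⟩) fun x hx => Or.inr ?_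
  · rw [Real.dist_eq, abs_le]; constructor <;> linarith [hx.1, hx.2]
  · set d := ⌊5 * x - 1⌋₊
    have hd := Nat.floor_le (a := 5 * x - 1) (by linarith [hx.1])
    have hd' := Nat.lt_floor_add_one (5 * x - 1)
    have h4 : 4 ≤ d := Nat.le_floor (by push_cast; linarith [hx.1])
    have h9 : d ≤ 9 := Nat.floor_le_of_le (by push_cast; linarith [hx.2])
    refine ⟨5 * x - d, ⟨by linarith, by linarith⟩, _, lipschitzWith_add_div_five d,
      mapsTo_add_zero_one h4 h9, by ring⟩

theorem Icc_one_five_fourths_subset : Icc (1 : ℝ) (5 / 4) ⊆ 𝒮 := by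
  refine isCompact.isClosed.subset_of_forall_mem_or_lipschitz_image (K := 1 / 5) (by norm_num)
    (R := 1) (fun x hx => ⟨1, one_mem, ?_⟩) fun x hx => ?_
  · rw [Real.dist_eq, abs_le]; constructor <;> linarith [hx.1, hx.2]
  rcases le_or_gt x (6 / 5) with hx6 | hx6
  · left
    have h5x : 5 * x - 4 ∈ Icc (1 : ℝ) 2 := ⟨by linarith [hx.1], by linarith⟩
    obtain ⟨r, hr, e, he, hre⟩ := Icc_one_two_subset h5x
    dsimp only at hre
    rcases he with rfl | rfl
    · convert digit_mem (b := 4) (by simp) hr using 1; push_cast; linarith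
    · convert digit_mem (b := 5) (by simp) hr using 1; push_cast; linarith
  · right
    refine ⟨5 * x - 5, ⟨by linarith, by linarith [hx.2]⟩, _, lipschitzWith_add_div_five 5,
      fun y hy => by simpa using digit_mem (b := 5) (by simp) hy, by ring⟩

theorem sub_eight_mem {x : ℝ} (hx : x ∈ 𝒮) (h : 7 / 5 < x) : 5 * x - 8 ∈ 𝒮 := by
  obtain ⟨b, hb, y, hy, rfl⟩ := mem_iff.1 hx
  have hb5 : 5 < b := by exact_mod_cast (by linarith [(subset_Icc hy).2] : (5 : ℝ) < b)
  obtain rfl : b = 8 := by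
    obtain rfl | rfl | rfl | rfl | rfl | rfl := hb <;> omega
  convert hy using 1
  push_cast
  ring

theorem Ioo_two_sub_inter_eq_empty (k : ℕ) :
    Ioo (2 - 3 / 5 ^ k : ℝ) (2 - 2 / 5 ^ k) ∩ 𝒮 = ∅ := by
  induction k with
  | zero =>
    refine eq_empty_of_forall_notMem fun x ⟨hx, hxS⟩ => ?_
    norm_num at hx
    linarith [(subset_Icc hxS).1, hx.2]
  | succ k ih =>
    refine eq_empty_of_forall_notMem fun x ⟨⟨h3, h2⟩, hxS⟩ => ?_
    have e2 : (2 : ℝ) / 5 ^ (k + 1) = 2 / 5 ^ k / 5 := by ring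
    have e3 : (3 : ℝ) / 5 ^ (k + 1) = 3 / 5 ^ k / 5 := by ring
    have hk : (3 : ℝ) / 5 ^ k ≤ 3 := div_le_self (by norm_num) (one_le_pow₀ (by norm_num))
    have h8 := sub_eight_mem hxS (by linarith)
    exact notMem_empty _ (ih.subset ⟨⟨by linarith, by linarith⟩, h8⟩)

theorem two_sub_mem (k : ℕ) : (2 - 2 / 5 ^ k : ℝ) ∈ 𝒮 := by
  induction k with
  | zero => norm_num; exact zero_mem
  | succ k ih =>
    convert digit_mem (b := 8) (by simp) ih using 1
    push_cast
    ring

theorem mem_of_div_five_mem {x : ℝ} (hx : x < 1) (h : x / 5 ∈ 𝒮) : x ∈ 𝒮 := by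
  obtain ⟨b, -, y, hy, hxy⟩ := mem_iff.1 h
  have hb1 : (b : ℝ) < 1 := by linarith [(subset_Icc hy).1]
  obtain rfl : b = 0 := Nat.lt_one_iff.1 (by exact_mod_cast hb1)
  convert hy using 1
  push_cast at hxy
  linarith

theorem seven_tenths_notMem : (7 / 10 : ℝ) ∉ 𝒮 := by
  intro h
  obtain ⟨b, hb, y, hy, hxy⟩ := mem_iff.1 h
  have hb1 : 1 < b := by exact_mod_cast (by linarith [(subset_Icc hy).2] : (1 : ℝ) < b)
  have hb4 : b < 4 := by exact_mod_cast (by linarith [(subset_Icc hy).1] : (b : ℝ) < 4)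
  obtain rfl : b = 2 := by
    obtain rfl | rfl | rfl | rfl | rfl | rfl := hb <;> omega
  push_cast at hxy
  exact notMem_empty _
    ((Ioo_two_sub_inter_eq_empty 1).subset ⟨⟨by norm_num; linarith, by norm_num; linarith⟩, hy⟩)

theorem seven_tenths_div_pow_notMem (k : ℕ) : (7 / 10 : ℝ) / 5 ^ k ∉ 𝒮 := by
  induction k with
  | zero => simpa using seven_tenths_notMem
  | succ k ih =>
    intro h
    rw [pow_succ, ← div_div] at h
    exact ih (mem_of_div_five_mem
      ((div_le_self (by norm_num) (one_le_pow₀ (by norm_num))).trans_lt (by norm_num)) h)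

theorem div_pow_mem {x : ℝ} (hx : x ∈ 𝒮) (k : ℕ) : x / 5 ^ k ∈ 𝒮 := by
  induction k with
  | zero => simpa using hx
  | succ k ih =>
    rw [pow_succ, ← div_div]
    simpa using digit_mem (b := 0) (by simp) ih

theorem Icc_div_pow_subset (k : ℕ) : Icc (1 / 5 ^ k : ℝ) (5 / 4 / 5 ^ k) ⊆ 𝒮 := by
  intro x hx
  have hq : (0 : ℝ) < 5 ^ k := by positivity
  have hx' : x * 5 ^ k ∈ Icc (1 : ℝ) (5 / 4) :=
    ⟨(div_le_iff₀ hq).1 hx.1, (le_div_iff₀ hq).1 hx.2⟩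
  simpa [hq.ne'] using div_pow_mem (Icc_one_five_fourths_subset hx') k

theorem infinite_isMaxInterval : {p : ℝ × ℝ | IsMaxInterval 𝒮 p.1 p.2}.Infinite := by
  have hk : ∀ k : ℕ, ∃ p : ℝ × ℝ,
      IsMaxInterval 𝒮 p.1 p.2 ∧ p.1 ≤ 1 / 5 ^ k ∧ 5 / 4 / 5 ^ k ≤ p.2 := by
    intro k
    obtain ⟨a, b, ha, hb, h⟩ := exists_isMaxInterval_superset isCompact
      (by gcongr; norm_num) (Icc_div_pow_subset k)
    exact ⟨(a, b), h, ha, hb⟩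
  choose p hp hp1 hp2 using hk
  have hanti : StrictAnti fun k => (p k).2 := strictAnti_nat_of_succ_lt fun k => by
    have h1 : (p (k + 1)).1 ≤ 7 / 10 / 5 ^ k := calc
      (p (k + 1)).1 ≤ 1 / 5 ^ (k + 1) := hp1 (k + 1)
      _ = 1 / 5 / 5 ^ k := by ring
      _ ≤ 7 / 10 / 5 ^ k := div_le_div_of_nonneg_right (by norm_num) (by positivity)
    have h2 : (p (k + 1)).2 < 7 / 10 / 5 ^ k :=
      not_le.1 fun h => seven_tenths_div_pow_notMem k ((hp (k + 1)).2.1 ⟨h1, h⟩)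
    calc (p (k + 1)).2 < 7 / 10 / 5 ^ k := h2
      _ < 5 / 4 / 5 ^ k := div_lt_div_of_pos_right (by norm_num) (by positivity)
      _ ≤ (p k).2 := hp2 k
  exact infinite_of_injective_forall_mem (Function.Injective.of_comp hanti.injective) hp

theorem infinite_isMaxGap : {p : ℝ × ℝ | IsMaxGap 𝒮 p.1 p.2}.Infinite := by
  have hk : ∀ k : ℕ, ∃ a, IsMaxGap 𝒮 a (2 - 2 / 5 ^ (k + 1)) := fun k => by
    have h3 : (3 : ℝ) / 5 ^ (k + 1) ≤ 3 / 5 := by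
      gcongr
      exact le_self_pow₀ (by norm_num) (by omega)
    exact exists_isMaxGap_of_right_mem isCompact.isClosed zero_mem (by linarith)
      (by gcongr; norm_num) (two_sub_mem _) (Ioo_two_sub_inter_eq_empty _)
  choose a ha using hk
  have hmono : StrictMono fun k : ℕ => (2 - 2 / 5 ^ (k + 1) : ℝ) :=
    strictMono_nat_of_lt_succ fun k => by gcongr <;> norm_num
  exact infinite_of_injective_forall_mem (f := fun k => (a k, 2 - 2 / 5 ^ (k + 1)))
    (fun i j h => hmono.injective (congrArg Prod.snd h)) ha

end LinCantorFive

/-- For `A = {0,1,4}`, `n = 5`: `[1, 5/4] ⊆ C_A + C_A`, and `C_A + C_A` has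
infinitely many maximal intervals and infinitely many maximal gaps. -/
theorem structure_014 :
    Set.Icc (1 : ℝ) (5 / 4) ⊆ linCantor 5 {0, 1, 4} + linCantor 5 {0, 1, 4} ∧
    {p : ℝ × ℝ |
      IsMaxInterval (linCantor 5 {0, 1, 4} + linCantor 5 {0, 1, 4}) p.1 p.2}.Infinite ∧
    {p : ℝ × ℝ |
      IsMaxGap (linCantor 5 {0, 1, 4} + linCantor 5 {0, 1, 4}) p.1 p.2}.Infinite := by
  rw [linCantor_five_add_self]
  exact ⟨LinCantorFive.Icc_one_five_fourths_subset, LinCantorFive.infinite_isMaxInterval,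
    LinCantorFive.infinite_isMaxGap⟩
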